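/- Let f : {-1,1}^R -> [-1,1] and suppose that the 'non-linear' Fourier mass satisfies ||f^{!=1}||_2^2 = sum_{|S| != 1} \hat{f}(S)^2 <= 2^{-R}. Then sum_{i=1}^R |\hat{f}({i})| <= 2. -/

import Mathlib

/-
If the linear coefficients had absolute sum `> 2`, evaluate the Fourier expansion of `f` at the
point `y` with `y_i = sign f̂({i})`: there the linear part equals `∑ |f̂({i})| > 2` while
`|f y| ≤ 1`, so the non-linear part has absolute value `> 1`. By Cauchy–Schwarz over the
`≤ 2^R` characters involved, its square is at most `2^R ‖f^{≠1}‖₂² ≤ 1`, a contradiction.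
-/

open Finset

/-- The character `χ_S` on the boolean cube `{-1,1}^R` (encoded via `Fin R → Bool`,
with `true ↦ 1` and `false ↦ -1`). -/
noncomputable def bchi {R : ℕ} (S : Finset (Fin R)) (x : Fin R → Bool) : ℝ :=
  ∏ i ∈ S, (if x i then (1:ℝ) else -1)

/-- The Fourier coefficient `f̂(S) = E_x[f(x) χ_S(x)]` over the uniform measure. -/
noncomputable def bfourier {R : ℕ} (f : (Fin R → Bool) → ℝ) (S : Finset (Fin R)) : ℝ :=
  (2^R : ℝ)⁻¹ * ∑ x : Fin R → Bool, f x * bchi S x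

lemma sum_filter_card_eq_one {α M : Type*} [Fintype α] [AddCommMonoid M] (g : Finset α → M) :
    ∑ S with S.card = 1, g S = ∑ i, g {i} := by
  have : ({S | S.card = 1} : Finset (Finset α)) = powersetCard 1 univ := by
    rw [powersetCard_eq_filter, powerset_univ]
  rw [this, powersetCard_one, sum_map]
  rfl

section Fourier

variable {R : ℕ}

lemma bchi_singleton (i : Fin R) (x : Fin R → Bool) :
    bchi {i} x = if x i then 1 else -1 :=
  prod_singleton _ _

lemma bchi_sq (S : Finset (Fin R)) (x : Fin R → Bool) : bchi S x ^ 2 = 1 := by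
  rw [bchi, ← prod_pow]
  exact prod_eq_one fun i _ => by cases x i <;> norm_num

lemma sum_bchi_mul_bchi (x y : Fin R → Bool) :
    ∑ S, bchi S x * bchi S y = if x = y then (2 ^ R : ℝ) else 0 := by
  have hfactor : ∀ S, bchi S x * bchi S y
      = ∏ i ∈ S, (if x i = y i then (1 : ℝ) else -1) := fun S => by
    rw [bchi, bchi, ← prod_mul_distrib]
    exact prod_congr rfl fun i _ => by cases x i <;> cases y i <;> norm_num
  simp only [hfactor, ← powerset_univ, ← prod_one_add]
  split_ifs with hxy
  · simp [hxy, one_add_one_eq_two]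
  · obtain ⟨i, hi⟩ := Function.ne_iff.mp hxy
    exact prod_eq_zero (mem_univ i) (by simp [hi])

lemma sum_bfourier_mul_bchi (f : (Fin R → Bool) → ℝ) (y : Fin R → Bool) :
    ∑ S, bfourier f S * bchi S y = f y := by
  calc ∑ S, bfourier f S * bchi S y
      = (2 ^ R : ℝ)⁻¹ * ∑ x, f x * ∑ S, bchi S x * bchi S y := by
        simp only [bfourier, mul_sum, sum_mul]
        rw [sum_comm]
        exact sum_congr rfl fun x _ => sum_congr rfl fun S _ => by ring
    _ = f y := by
        simp only [sum_bchi_mul_bchi, mul_ite, mul_zero, sum_ite_eq', mem_univ, if_true]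
        field_simp

lemma sq_sum_bfourier_mul_bchi_le (f : (Fin R → Bool) → ℝ) (s : Finset (Finset (Fin R)))
    (y : Fin R → Bool) :
    (∑ S ∈ s, bfourier f S * bchi S y) ^ 2 ≤ 2 ^ R * ∑ S ∈ s, bfourier f S ^ 2 := by
  have hcard : (s.card : ℝ) ≤ 2 ^ R := by
    have := card_le_univ s
    rw [Fintype.card_finset, Fintype.card_fin] at this
    exact_mod_cast this
  calc (∑ S ∈ s, bfourier f S * bchi S y) ^ 2
      ≤ (∑ S ∈ s, bfourier f S ^ 2) * ∑ S ∈ s, bchi S y ^ 2 := sum_mul_sq_le_sq_mul_sq _ _ _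
    _ = s.card * ∑ S ∈ s, bfourier f S ^ 2 := by simp [bchi_sq, mul_comm]
    _ ≤ 2 ^ R * ∑ S ∈ s, bfourier f S ^ 2 :=
        mul_le_mul_of_nonneg_right hcard (sum_nonneg fun S _ => sq_nonneg _)

lemma sum_mul_bchi_singleton_sign (c : Fin R → ℝ) :
    ∑ i, c i * bchi {i} (fun j => decide (0 ≤ c j)) = ∑ i, |c i| := by
  refine sum_congr rfl fun i _ => ?_
  rw [bchi_singleton]
  by_cases hc : 0 ≤ c i
  · simp [hc, abs_of_nonneg hc]
  · simp [hc, abs_of_neg (not_le.mp hc)]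

end Fourier

/-- If `f : {-1,1}^R → [-1,1]` has non-linear Fourier mass at most `2^{-R}`, then
`∑_i |f̂({i})| ≤ 2`. -/
theorem stmt19 (R : ℕ) (f : (Fin R → Bool) → ℝ) (hf : ∀ x, |f x| ≤ 1)
    (hmass : ∑ S ∈ Finset.univ.filter (fun S : Finset (Fin R) => S.card ≠ 1),
        (bfourier f S)^2 ≤ (2^R : ℝ)⁻¹) :
    ∑ i : Fin R, |bfourier f {i}| ≤ 2 := by
  by_contra! hlarge
  set y : Fin R → Bool := fun i => decide (0 ≤ bfourier f {i})
  set N := ∑ S with S.card ≠ 1, bfourier f S * bchi S y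
  have hsplit : ∑ i, |bfourier f {i}| + N = f y := by
    rw [← sum_mul_bchi_singleton_sign, ← sum_filter_card_eq_one (fun S => bfourier f S * bchi S y),
      sum_filter_add_sum_filter_not, sum_bfourier_mul_bchi]
  have hN : N < -1 := by linarith [(abs_le.mp (hf y)).2]
  have hNsq : N ^ 2 ≤ 1 := by
    calc N ^ 2 ≤ 2 ^ R * ∑ S with S.card ≠ 1, bfourier f S ^ 2 := sq_sum_bfourier_mul_bchi_le ..
      _ ≤ 2 ^ R * (2 ^ R)⁻¹ := by gcongr
      _ = 1 := mul_inv_cancel₀ (by positivity)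
  nlinarith
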